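/- arXiv:1401.1019 — 3 statements merged into one kernel-verified Lean document; each statement's English description precedes it below -/
import Mathlib

section
/- Let d ≥ 1 and let x ∈ ℝ^d be a nonzero vector. Then for every symmetric real d×d matrix f there exist a unique symmetric real d×d matrix h and a unique vector v ∈ ℝ^d such that f = h + i_x v and j_x h = 0. -/
/-- Symmetric multiplication of a vector `v` by `x`:
`(i_x v)_{ij} = (v_i x_j + v_j x_i)/2`. -/
noncomputable def symMul {d : ℕ} (x v : Fin d → ℝ) : Matrix (Fin d) (Fin d) ℝ :=
  Matrix.of fun i j => (v i * x j + v j * x i) / 2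

/-- Convolution of a symmetric matrix `u` with `x`: `(j_x u)_i = Σ_j u_{ij} x_j`. -/
noncomputable def convWith {d : ℕ} (x : Fin d → ℝ) (u : Matrix (Fin d) (Fin d) ℝ) : Fin d → ℝ :=
  fun i => ∑ j, u i j * x j

lemma conv_symMul {d : ℕ} (x u : Fin d → ℝ) (i : Fin d) :
    convWith x (symMul x u) i = (u i * (∑ j, x j * x j) + (∑ j, u j * x j) * x i) / 2 := by
  simp only [convWith, symMul, Matrix.of_apply]
  have h : ∀ j : Fin d, (u i * x j + u j * x i) / 2 * x j
      = (u i * (x j * x j) + (u j * x j) * x i) / 2 := fun j => by ring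
  simp_rw [h]
  rw [← Finset.sum_div, Finset.sum_add_distrib, ← Finset.mul_sum, ← Finset.sum_mul]

/-- For a nonzero `x ∈ ℝ^d`, every symmetric matrix `f` decomposes uniquely as
`f = h + i_x v` with `h` symmetric and `j_x h = 0`. -/
theorem symmetric_tensor_decomposition
    (d : ℕ) (hd : 1 ≤ d) (x : Fin d → ℝ) (hx : x ≠ 0)
    (f : Matrix (Fin d) (Fin d) ℝ) (hf : f.IsSymm) :
    ∃! p : Matrix (Fin d) (Fin d) ℝ × (Fin d → ℝ),
      p.1.IsSymm ∧ f = p.1 + symMul x p.2 ∧ convWith x p.1 = 0 := by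
  have hc : (0:ℝ) < ∑ i, x i * x i := by
    rcases Function.ne_iff.mp hx with ⟨i, hi⟩
    refine Finset.sum_pos' (fun j _ => mul_self_nonneg _) ⟨i, Finset.mem_univ i, ?_⟩
    exact mul_self_pos.mpr hi
  set c := ∑ i, x i * x i with hcdef
  have hc0 : c ≠ 0 := ne_of_gt hc
  -- injectivity of v ↦ j_x (i_x v)
  have hinj : ∀ u : Fin d → ℝ, convWith x (symMul x u) = 0 → u = 0 := by
    intro u hu
    have h1 : ∀ i, u i * c + (∑ j, u j * x j) * x i = 0 := by
      intro i
      have := congrFun hu i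
      rw [conv_symMul, ← hcdef] at this
      simp only [Pi.zero_apply] at this
      linarith
    set s := ∑ j, u j * x j with hsdef
    have h2 : s * c + s * c = 0 := by
      have : ∑ i, (u i * c + s * x i) * x i = 0 := by
        simp_rw [fun i => (h1 i)]; simp
      calc s * c + s * c = ∑ i, (u i * c + s * x i) * x i := by
            have expand : ∀ i, (u i * c + s * x i) * x i
                = u i * x i * c + s * (x i * x i) := fun i => by ring
            simp_rw [expand]
            rw [Finset.sum_add_distrib, ← Finset.sum_mul, ← Finset.mul_sum, ← hsdef, ← hcdef]
        _ = 0 := this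
    have hs : s = 0 := by
      have : s * c = 0 := by linarith
      exact (mul_eq_zero.mp this).resolve_right hc0
    funext i
    have := h1 i
    rw [hs] at this
    have : u i * c = 0 := by linarith
    simpa using (mul_eq_zero.mp this).resolve_right hc0
  set w : Fin d → ℝ := convWith x f with hwdef
  set a := ∑ i, w i * x i with hadef
  set v : Fin d → ℝ := fun i => (2 * w i - a / c * x i) / c with hvdef
  have hs : ∑ j, v j * x j = a / c := by
    have h : ∀ j : Fin d, v j * x j = (2 * (w j * x j) - a / c * (x j * x j)) / c :=
      fun j => by simp only [hvdef]; ring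
    simp_rw [h]
    rw [← Finset.sum_div, Finset.sum_sub_distrib, ← Finset.mul_sum, ← Finset.mul_sum,
      ← hcdef, ← hadef]
    field_simp
    ring
  have hconv : convWith x (symMul x v) = w := by
    funext i
    rw [conv_symMul, ← hcdef, hs]
    simp only [hvdef]
    field_simp
    ring
  have hsymmul : ∀ u : Fin d → ℝ, (symMul x u).IsSymm := by
    intro u
    ext i j
    simp [symMul, Matrix.IsSymm, Matrix.transpose_apply]
    ring
  refine ⟨(f - symMul x v, v), ⟨?_, ?_, ?_⟩, ?_⟩
  · exact hf.sub (hsymmul v)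
  · simp
  · funext i
    simp only [convWith, Matrix.sub_apply, sub_mul, Finset.sum_sub_distrib]
    have : ∑ j, symMul x v i j * x j = convWith x (symMul x v) i := rfl
    rw [this, hconv]
    simp [hwdef, convWith]
  · rintro ⟨h₂, v₂⟩ ⟨hsym₂, hdec₂, hconv₂⟩
    have hcf : convWith x (symMul x v₂) = w := by
      funext i
      have := congrFun hconv₂ i
      have h2 : w i = convWith x h₂ i + convWith x (symMul x v₂) i := by
        simp only [hwdef, convWith, hdec₂, Matrix.add_apply, add_mul,
          Finset.sum_add_distrib]
      simp only [Pi.zero_apply] at this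
      rw [h2, this]; ring
    have hvv : v₂ = v := by
      have hsub : convWith x (symMul x (v₂ - v)) = 0 := by
        funext i
        have e1 := congrFun hcf i
        have e2 := congrFun hconv i
        rw [conv_symMul] at e1 e2 ⊢
        simp only [Pi.sub_apply, Pi.zero_apply, sub_mul, Finset.sum_sub_distrib]
        linarith
      have := hinj _ hsub
      have : v₂ - v = 0 := this
      funext i
      have := congrFun this i
      simp only [Pi.sub_apply, Pi.zero_apply] at this
      linarith
    have : h₂ = f - symMul x v := by
      rw [← hvv, hdec₂]; simp
    exact Prod.ext this hvv
end

section
/- Let d ≥ 1, let ω ∈ ℝ^d, and let a ∈ {1,…,d} be an index with ω_a ≠ 0. Let f be a symmetric real d×d matrix and let v be an arbitrary real d×d matrix such that f_{ml} ω_n + f_{nl} ω_m − f_{mn} ω_l = v_{ml} ω_n + v_{nl} ω_m for all indices m, n, l ∈ {1,…,d}. Then f_{mn} = ω_m u_n + ω_n u_m for all m, n, where u ∈ ℝ^d is the vector with components u_m = (v_{am} − v_{ma})/ω_a + (v_{aa}/ω_a²) ω_m. -/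
/-!
Put `i = j = k = a` in the system to get `f a a = 2 v a a`, then `i = j = a` to read off the
row `f a ·`; with this, `ω a * u n = f a n - v n a`. Finally `k = a` together with the symmetry
of `f` expresses `ω a * f m n` through the row `f a ·`, which is the potential form multiplied
by `ω a`.
-/

variable {K ι : Type*} [Field K]

def SolvesKernelSystem (ω : ι → K) (f v : Matrix ι ι K) : Prop :=
  ∀ i j k, f i k * ω j + f j k * ω i - f i j * ω k = v i k * ω j + v j k * ω i

def potentialVector (ω : ι → K) (v : Matrix ι ι K) (a : ι) (n : ι) : K :=
  (v a n - v n a) / ω a + v a a / ω a ^ 2 * ω n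

namespace SolvesKernelSystem

variable {ω : ι → K} {f v : Matrix ι ι K} {a : ι}

theorem diag_eq (h : SolvesKernelSystem ω f v) (ha : ω a ≠ 0) : f a a = 2 * v a a :=
  mul_right_cancel₀ ha (by linear_combination h a a a)

theorem row_mul [NeZero (2 : K)] (h : SolvesKernelSystem ω f v) (ha : ω a ≠ 0) (m : ι) :
    f a m * ω a = v a m * ω a + v a a * ω m := by
  refine mul_left_cancel₀ (two_ne_zero : (2 : K) ≠ 0) ?_
  linear_combination h a a m + ω m * h.diag_eq ha

theorem mul_potentialVector [NeZero (2 : K)] (h : SolvesKernelSystem ω f v) (ha : ω a ≠ 0)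
    (n : ι) : ω a * potentialVector ω v a n = f a n - v n a := by
  unfold potentialVector
  field_simp
  linear_combination -(h.row_mul ha n)

theorem mul_eq_of_isSymm (h : SolvesKernelSystem ω f v) (hf : f.IsSymm) (m n : ι) :
    f m n * ω a = ω m * (f a n - v n a) + ω n * (f a m - v m a) := by
  rw [← hf.apply a m, ← hf.apply a n]
  linear_combination -(h m n a)

end SolvesKernelSystem

theorem kernel_solution_is_potential_general
    (d : ℕ) (ω : Fin d → ℝ) (a : Fin d) (ha : ω a ≠ 0)
    (f v : Matrix (Fin d) (Fin d) ℝ) (hf : f.IsSymm)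
    (heq : ∀ m n l, f m l * ω n + f n l * ω m - f m n * ω l
      = v m l * ω n + v n l * ω m) :
    ∀ m n, f m n = ω m * ((v a n - v n a) / ω a + v a a / (ω a) ^ 2 * ω n)
      + ω n * ((v a m - v m a) / ω a + v a a / (ω a) ^ 2 * ω m) := by
  intro m n
  have h : SolvesKernelSystem ω f v := heq
  refine mul_right_cancel₀ ha ?_
  rw [h.mul_eq_of_isSymm hf, ← h.mul_potentialVector ha, ← h.mul_potentialVector ha]
  unfold potentialVector
  ring

/-- Linear-algebra core of the kernel computation for the principal symbol of the
normal operator of the linearized geodesic X-ray transform: a symmetric matrix `f`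
solving `f_{ml} ω_n + f_{nl} ω_m − f_{mn} ω_l = v_{ml} ω_n + v_{nl} ω_m` for all
indices is of potential form `f_{mn} = ω_m u_n + ω_n u_m`. -/
theorem kernel_solution_is_potential
    (d : ℕ) (hd : 1 ≤ d) (ω : Fin d → ℝ) (a : Fin d) (ha : ω a ≠ 0)
    (f v : Matrix (Fin d) (Fin d) ℝ) (hf : f.IsSymm)
    (heq : ∀ m n l, f m l * ω n + f n l * ω m - f m n * ω l
      = v m l * ω n + v n l * ω m) :
    ∀ m n, f m n = ω m * ((v a n - v n a) / ω a + v a a / (ω a) ^ 2 * ω n)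
      + ω n * ((v a m - v m a) / ω a + v a a / (ω a) ^ 2 * ω m) :=
  kernel_solution_is_potential_general d ω a ha f v hf heq
end

section
/- Let d ≥ 1, let ω ∈ ℝ^d be nonzero, and let f be a symmetric real d×d matrix such that Σ_{i,j} f_{ij} ξ_i ξ_j = 0 for every ξ ∈ ℝ^d with ⟨ξ, ω⟩ = 0. Then there exists a vector v ∈ ℝ^d such that f_{ij} = v_i ω_j + v_j ω_i for all i, j. -/
/-!
Write `B x y = x ⬝ᵥ f *ᵥ y`. By polarization `B` vanishes on pairs of vectors of the
hyperplane `ω⊥`. Fix `u` with `u ⬝ᵥ ω = 1`; then `x - (x ⬝ᵥ ω) • u` lies in `ω⊥`, and expanding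
`B` on two such vectors gives
`B x y = (x ⬝ᵥ ω) (f u ⬝ᵥ y) + (y ⬝ᵥ ω) (f u ⬝ᵥ x) - (x ⬝ᵥ ω) (y ⬝ᵥ ω) B u u`,
which is the symmetrized product of `ω` with `v = f u - (B u u / 2) ω`.
-/

namespace Matrix

variable {ι R K : Type*} [Fintype ι]

theorem sum_sum_mul_mul_eq_dotProduct_mulVec [CommSemiring R] (f : Matrix ι ι R) (x y : ι → R) :
    ∑ i, ∑ j, f i j * x i * y j = x ⬝ᵥ f *ᵥ y := by
  rw [dot_mulVec_eq_sum_sum, Finset.sum_comm]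
  simp only [mul_comm (f _ _)]

theorem IsSymm.dotProduct_mulVec_comm [CommSemiring R] {f : Matrix ι ι R} (hf : f.IsSymm)
    (x y : ι → R) : x ⬝ᵥ f *ᵥ y = y ⬝ᵥ f *ᵥ x := by
  rw [← dotProduct_transpose_mulVec, hf.eq]

theorem IsSymm.dotProduct_mulVec_eq_zero_of_dotProduct_eq_zero [Field K] [NeZero (2 : K)]
    {f : Matrix ι ι K} (hf : f.IsSymm) {ω : ι → K}
    (hq : ∀ ξ, ξ ⬝ᵥ ω = 0 → ξ ⬝ᵥ f *ᵥ ξ = 0) {x y : ι → K} (hx : x ⬝ᵥ ω = 0)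
    (hy : y ⬝ᵥ ω = 0) : x ⬝ᵥ f *ᵥ y = 0 := by
  have hsum := hq (x + y) (by rw [add_dotProduct, hx, hy, add_zero])
  rw [mulVec_add, dotProduct_add, add_dotProduct, add_dotProduct, hq x hx, hq y hy,
    hf.dotProduct_mulVec_comm y x] at hsum
  have h2 : (2 : K) * (x ⬝ᵥ f *ᵥ y) = 0 := by linear_combination hsum
  exact (mul_eq_zero.mp h2).resolve_left two_ne_zero

theorem IsSymm.dotProduct_mulVec_eq_of_dotProduct_eq_one [CommRing R] {f : Matrix ι ι R}
    (hf : f.IsSymm) {ω u : ι → R}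
    (hB : ∀ x y, x ⬝ᵥ ω = 0 → y ⬝ᵥ ω = 0 → x ⬝ᵥ f *ᵥ y = 0) (hu : u ⬝ᵥ ω = 1)
    (x y : ι → R) :
    x ⬝ᵥ f *ᵥ y = (x ⬝ᵥ ω) * (f *ᵥ u ⬝ᵥ y) + (y ⬝ᵥ ω) * (f *ᵥ u ⬝ᵥ x)
      - (x ⬝ᵥ ω) * (y ⬝ᵥ ω) * (u ⬝ᵥ f *ᵥ u) := by
  have hproj : ∀ z : ι → R, (z - (z ⬝ᵥ ω) • u) ⬝ᵥ ω = 0 := fun z => by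
    rw [sub_dotProduct, smul_dotProduct, hu, smul_eq_mul, mul_one, sub_self]
  have hxy := hB _ _ (hproj x) (hproj y)
  rw [mulVec_sub, mulVec_smul, dotProduct_sub, dotProduct_smul, sub_dotProduct, sub_dotProduct,
    smul_dotProduct, smul_dotProduct, hf.dotProduct_mulVec_comm u y] at hxy
  rw [dotProduct_comm (f *ᵥ u) x, dotProduct_comm (f *ᵥ u) y]
  linear_combination hxy

theorem exists_dotProduct_eq_one [Field K] {ω : ι → K} (hω : ω ≠ 0) : ∃ u, u ⬝ᵥ ω = 1 := by
  classical
  obtain ⟨k, hk⟩ := Function.ne_iff.mp hω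
  exact ⟨Pi.single k (ω k)⁻¹, by rw [single_dotProduct, inv_mul_cancel₀ hk]⟩

theorem IsSymm.exists_eq_vecMulVec_add_vecMulVec [Field K] [NeZero (2 : K)]
    {f : Matrix ι ι K} (hf : f.IsSymm) {ω : ι → K} (hω : ω ≠ 0)
    (hq : ∀ ξ, ξ ⬝ᵥ ω = 0 → ξ ⬝ᵥ f *ᵥ ξ = 0) :
    ∃ v, f = vecMulVec v ω + vecMulVec ω v := by
  classical
  obtain ⟨u, hu⟩ := exists_dotProduct_eq_one hω
  refine ⟨f *ᵥ u - (u ⬝ᵥ f *ᵥ u / 2) • ω, ?_⟩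
  ext i j
  have hij := hf.dotProduct_mulVec_eq_of_dotProduct_eq_one
    (fun _ _ => hf.dotProduct_mulVec_eq_zero_of_dotProduct_eq_zero hq) hu
    (Pi.single i 1) (Pi.single j 1)
  rw [mulVec_single_one, single_one_dotProduct, single_one_dotProduct, single_one_dotProduct,
    dotProduct_single_one, dotProduct_single_one, col_apply] at hij
  rw [hij, add_apply, vecMulVec_apply, vecMulVec_apply, Pi.sub_apply, Pi.sub_apply,
    Pi.smul_apply, Pi.smul_apply, smul_eq_mul, smul_eq_mul]
  field_simp
  ring

end Matrix

open Matrix in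
theorem vanishing_on_hyperplane_is_potential_general
    (d : ℕ) (ω : Fin d → ℝ) (hω : ω ≠ 0)
    (f : Matrix (Fin d) (Fin d) ℝ) (hf : f.IsSymm)
    (hq : ∀ ξ : Fin d → ℝ, (∑ i, ξ i * ω i) = 0 → ∑ i, ∑ j, f i j * ξ i * ξ j = 0) :
    ∃ v : Fin d → ℝ, ∀ i j, f i j = v i * ω j + v j * ω i := by
  obtain ⟨v, rfl⟩ := hf.exists_eq_vecMulVec_add_vecMulVec hω fun ξ hξ => by
    rw [← sum_sum_mul_mul_eq_dotProduct_mulVec]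
    exact hq ξ hξ
  exact ⟨v, fun i j => by rw [Matrix.add_apply, vecMulVec_apply, vecMulVec_apply, mul_comm (ω i)]⟩

/-- A symmetric matrix whose quadratic form vanishes on the hyperplane orthogonal to a
nonzero vector `ω` is the symmetrized product of `ω` with some vector `v`. -/
theorem vanishing_on_hyperplane_is_potential
    (d : ℕ) (hd : 1 ≤ d) (ω : Fin d → ℝ) (hω : ω ≠ 0)
    (f : Matrix (Fin d) (Fin d) ℝ) (hf : f.IsSymm)
    (hq : ∀ ξ : Fin d → ℝ, (∑ i, ξ i * ω i) = 0 → ∑ i, ∑ j, f i j * ξ i * ξ j = 0) :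
    ∃ v : Fin d → ℝ, ∀ i j, f i j = v i * ω j + v j * ω i :=
  vanishing_on_hyperplane_is_potential_general d ω hω f hf hq
end
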